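/- For all real numbers a ∈ [0, 1) and b ≥ 1, one has B(a, b) ≥ a, where B(a, b) = 4 − ((4 − a)²/(2·(1 − a)))·(b − √(b² − 12·(1 − a)·b/(4 − a)²)). (Note that the expression under the square root is nonnegative since 12·(1 − a)/(4 − a)² ≤ 3/4 ≤ b.) -/

import Mathlib

/-- The quality-ratio bound function of the defection-free scheme. -/
noncomputable def B (a b : ℝ) : ℝ :=
  4 - ((4 - a) ^ 2 / (2 * (1 - a))) *
    (b - Real.sqrt (b ^ 2 - 12 * (1 - a) * b / (4 - a) ^ 2))

/-! With `c = 2(1 - a)/(4 - a)` the radicand of `B a b` is `(b - c)² + c²(b - 1)`, and the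
prefactor `(4 - a)²/(2(1 - a))` is `(4 - a)/c`, so `B a b - a` is a positive multiple of
`√((b - c)² + c²(b - 1)) - (b - c)`, which is nonnegative as soon as `b ≥ 1`. -/

theorem B_radicand_eq (a b : ℝ) (ha4 : a ≠ 4) :
    b ^ 2 - 12 * (1 - a) * b / (4 - a) ^ 2 =
      (b - 2 * (1 - a) / (4 - a)) ^ 2 + (2 * (1 - a) / (4 - a)) ^ 2 * (b - 1) := by
  have : 4 - a ≠ 0 := sub_ne_zero.2 (Ne.symm ha4)
  field_simp
  ring

theorem B_eq_self_add (a b : ℝ) (ha1 : a ≠ 1) (ha4 : a ≠ 4) :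
    B a b = a + (4 - a) ^ 2 / (2 * (1 - a)) *
      (√((b - 2 * (1 - a) / (4 - a)) ^ 2 + (2 * (1 - a) / (4 - a)) ^ 2 * (b - 1)) -
        (b - 2 * (1 - a) / (4 - a))) := by
  have h1 : 1 - a ≠ 0 := sub_ne_zero.2 (Ne.symm ha1)
  have h4 : 4 - a ≠ 0 := sub_ne_zero.2 (Ne.symm ha4)
  rw [B, B_radicand_eq a b ha4]
  field_simp
  ring

theorem B_ge_self_general (a b : ℝ) (ha1 : a < 1) (hb : 1 ≤ b) :
    B a b ≥ a := by
  set c := 2 * (1 - a) / (4 - a)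
  have hprefactor : 0 < (4 - a) ^ 2 / (2 * (1 - a)) :=
    div_pos (pow_pos (by linarith) 2) (by linarith)
  have hsqrt : b - c ≤ √((b - c) ^ 2 + c ^ 2 * (b - 1)) := by
    have : 0 ≤ b - 1 := sub_nonneg.2 hb
    exact Real.le_sqrt_of_sq_le (le_add_of_nonneg_right (by positivity))
  rw [B_eq_self_add a b ha1.ne (by linarith)]
  exact le_add_of_nonneg_right (mul_nonneg hprefactor.le (sub_nonneg.2 hsqrt))

/-- for all `a ∈ [0, 1)` and `b ≥ 1`, `B(a, b) ≥ a`. -/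
theorem B_ge_self (a b : ℝ) (ha0 : 0 ≤ a) (ha1 : a < 1) (hb : 1 ≤ b) :
    B a b ≥ a :=
  B_ge_self_general a b ha1 hb
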